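/- arXiv:2208.13813 — 2 statements merged into one kernel-verified Lean document; each statement's English description precedes it below -/
import Mathlib

section
/- Let E be a normed lattice in which every order interval [0,x]_E (x ∈ E⁺) is compact in the weak topology of E, let F be a normed lattice, and let φ: E → F be a continuous, injective, almost interval preserving linear map. Then φ is an interval preserving lattice homomorphism. -/
/-!
A weakly compact set is weakly closed, hence norm closed, and continuous linear maps are weakly
continuous; so `φ '' [0, x]` is closed and almost interval preservation upgrades to interval
preservation. For `a, b ≥ 0` the element `φ a ⊓ φ b` then lies in both `φ '' [0, a]` and
`φ '' [0, b]`, and injectivity forces the two preimages to coincide in a common lower bound of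
`a` and `b`, whence `φ (a ⊓ b) = φ a ⊓ φ b`. Translation and `a ⊓ b + a ⊔ b = a + b` extend this
to all infima and suprema.
-/

open Set

section WeakTopology

variable {𝕜 E F : Type*} [CommRing 𝕜] [TopologicalSpace 𝕜] [ContinuousAdd 𝕜]
  [ContinuousConstSMul 𝕜 𝕜]
  [AddCommGroup E] [Module 𝕜 E] [TopologicalSpace E]
  [AddCommGroup F] [Module 𝕜 F] [TopologicalSpace F]

theorem IsCompact.toWeakSpace_image_map {s : Set E} (hs : IsCompact (toWeakSpace 𝕜 E '' s))
    (f : E →L[𝕜] F) : IsCompact (toWeakSpace 𝕜 F '' (f '' s)) := by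
  have hmap := hs.image (WeakSpace.map f).continuous
  rw [image_image] at hmap ⊢
  exact hmap

theorem IsCompact.isClosed_of_toWeakSpace_image [T2Space 𝕜] [SeparatingDual 𝕜 F] {s : Set F}
    (hs : IsCompact (toWeakSpace 𝕜 F '' s)) : IsClosed s := by
  have hpre := hs.isClosed.preimage (toWeakSpaceCLM 𝕜 F).continuous
  rw [← (toWeakSpace 𝕜 F).injective.preimage_image s]
  exact hpre

end WeakTopology

section LatticeMaps

variable {E F G : Type*} [Lattice E] [Lattice F] [FunLike G E F] (φ : G)

theorem map_inf_of_injective_of_image_Icc [Zero E] [Zero F] [ZeroHomClass G E F] {a b : E}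
    (hmono : Monotone φ) (hinj : Function.Injective φ)
    (hip : ∀ x : E, 0 ≤ x → φ '' Icc 0 x = Icc 0 (φ x))
    (ha : 0 ≤ a) (hb : 0 ≤ b) : φ (a ⊓ b) = φ a ⊓ φ b := by
  have h0 : 0 ≤ φ a ⊓ φ b := by
    simpa only [map_zero] using le_inf (hmono ha) (hmono hb)
  obtain ⟨c, hca, hc⟩ : φ a ⊓ φ b ∈ φ '' Icc 0 a := by
    rw [hip a ha]; exact ⟨h0, inf_le_left⟩
  obtain ⟨c', hcb, hc'⟩ : φ a ⊓ φ b ∈ φ '' Icc 0 b := by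
    rw [hip b hb]; exact ⟨h0, inf_le_right⟩
  obtain rfl : c = c' := hinj (hc.trans hc'.symm)
  refine le_antisymm (le_inf (hmono inf_le_left) (hmono inf_le_right)) ?_
  exact hc ▸ hmono (le_inf hca.2 hcb.2)

variable [AddCommGroup E] [IsOrderedAddMonoid E] [AddCommGroup F] [IsOrderedAddMonoid F]
  [AddMonoidHomClass G E F]

theorem map_inf_of_map_inf_of_nonneg
    (h : ∀ a b : E, 0 ≤ a → 0 ≤ b → φ (a ⊓ b) = φ a ⊓ φ b) (x y : E) :
    φ (x ⊓ y) = φ x ⊓ φ y := by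
  have key := h (x - x ⊓ y) (y - x ⊓ y) (sub_nonneg.2 inf_le_left) (sub_nonneg.2 inf_le_right)
  rw [← inf_sub, sub_self, map_zero, map_sub, map_sub, ← inf_sub, eq_comm, sub_eq_zero] at key
  exact key.symm

theorem map_sup_of_map_inf (h : ∀ x y : E, φ (x ⊓ y) = φ x ⊓ φ y) (x y : E) :
    φ (x ⊔ y) = φ x ⊔ φ y := by
  have hφ : φ (x ⊓ y) + φ (x ⊔ y) = φ x + φ y := by rw [← map_add, inf_add_sup, map_add]
  rw [h, ← inf_add_sup (φ x) (φ y)] at hφ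
  exact add_left_cancel hφ

end LatticeMaps

theorem injective_almostIntervalPreserving_is_intervalPreserving_latticeHom_general
    {E F : Type*}
    [NormedAddCommGroup E] [Lattice E] [IsOrderedAddMonoid E]
    [NormedSpace ℝ E]
    [NormedAddCommGroup F] [Lattice F] [IsOrderedAddMonoid F]
    [NormedSpace ℝ F]
    (φ : E →L[ℝ] F)
    (hwc : ∀ x : E, 0 ≤ x → IsCompact (toWeakSpace ℝ E '' Icc 0 x))
    (hinj : Function.Injective φ)
    (hpos : ∀ x : E, 0 ≤ x → 0 ≤ φ x)
    (haip : ∀ x : E, 0 ≤ x → Icc (0 : F) (φ x) = closure (φ '' Icc 0 x)) :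
    (∀ x y : E, φ (x ⊔ y) = φ x ⊔ φ y) ∧
      ∀ x : E, 0 ≤ x → φ '' Icc 0 x = Icc 0 (φ x) := by
  have hmono : Monotone φ := (monotone_iff_map_nonneg φ).2 hpos
  have hip : ∀ x : E, 0 ≤ x → φ '' Icc 0 x = Icc 0 (φ x) := fun x hx => by
    rw [haip x hx, ((hwc x hx).toWeakSpace_image_map φ).isClosed_of_toWeakSpace_image.closure_eq]
  have hinf_nonneg : ∀ a b : E, 0 ≤ a → 0 ≤ b → φ (a ⊓ b) = φ a ⊓ φ b :=
    fun _ _ ha hb => map_inf_of_injective_of_image_Icc φ hmono hinj hip ha hb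
  exact ⟨map_sup_of_map_inf φ (map_inf_of_map_inf_of_nonneg φ hinf_nonneg), hip⟩

/-- A continuous, injective, almost interval preserving linear map from a
normed lattice with weakly compact order intervals into a normed lattice is an interval
preserving lattice homomorphism. -/
theorem injective_almostIntervalPreserving_is_intervalPreserving_latticeHom
    {E F : Type*}
    [NormedAddCommGroup E] [Lattice E] [HasSolidNorm E] [IsOrderedAddMonoid E]
    [NormedSpace ℝ E]
    [NormedAddCommGroup F] [Lattice F] [HasSolidNorm F] [IsOrderedAddMonoid F]
    [NormedSpace ℝ F]
    (φ : E →L[ℝ] F)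
    (hwc : ∀ x : E, 0 ≤ x → IsCompact (toWeakSpace ℝ E '' Icc 0 x))
    (hinj : Function.Injective φ)
    (hpos : ∀ x : E, 0 ≤ x → 0 ≤ φ x)
    (haip : ∀ x : E, 0 ≤ x → Icc (0 : F) (φ x) = closure (φ '' Icc 0 x)) :
    (∀ x y : E, φ (x ⊔ y) = φ x ⊔ φ y) ∧
      ∀ x : E, 0 ≤ x → φ '' Icc 0 x = Icc 0 (φ x) :=
  injective_almostIntervalPreserving_is_intervalPreserving_latticeHom_general φ hwc hinj hpos haip
end

section
/- Let I be a (not necessarily directed) nonempty index set, let (E_i)_{i∈I} be normed lattices, and let φ_i: E_i → E be continuous almost interval preserving linear maps into a normed lattice E such that E is the norm closure of ⋃_i φ_i(E_i). Let χ: E → F be a continuous linear map into a normed lattice F. Then χ is almost interval preserving if and only if every composition χ ∘ φ_i: E_i → F is almost interval preserving. -/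
/-!
Positivity of the `φ i` turns an approximation `φ i x ≈ g` of a positive `g` into the
approximation `g ⊓ (φ i x ⊔ 0) ∈ [0, φ i (x ⊔ 0)]`, so the images of positive cones are dense
in the positive cone of `G`. For such an image `s = φ i z` the interval `[0, χ s]` lies in the
closure of `χ [0, s]`, and this passes to every `g ≥ 0` near `s` with an error of `2 ‖χ‖ ‖g - s‖`:
cut `f ∈ [0, χ g]` down to `f ⊓ χ s`, and `v ∈ [0, s]` down to `v ⊓ g`.
-/

open Set Metric

def IsAlmostIntervalPreserving {E F : Type*} [Preorder E] [Zero E] [Preorder F] [Zero F]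
    [TopologicalSpace F] (T : E → F) : Prop :=
  (∀ x, 0 ≤ x → 0 ≤ T x) ∧ ∀ x, 0 ≤ x → Icc 0 (T x) = closure (T '' Icc 0 x)

theorem IsAlmostIntervalPreserving.comp {E G F : Type*} [Preorder E] [Zero E] [Preorder G]
    [Zero G] [TopologicalSpace G] [Preorder F] [Zero F] [TopologicalSpace F]
    {χ : G → F} {φ : E → G} (hχ : IsAlmostIntervalPreserving χ) (hχc : Continuous χ)
    (hφ : IsAlmostIntervalPreserving φ) : IsAlmostIntervalPreserving (χ ∘ φ) := by
  refine ⟨fun x hx => hχ.1 _ (hφ.1 x hx), fun x hx => ?_⟩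
  rw [Function.comp_apply, hχ.2 _ (hφ.1 x hx), hφ.2 x hx, closure_image_closure hχc, image_comp]

theorem IsAlmostIntervalPreserving.of_monotone {E F : Type*} [Preorder E] [Zero E]
    [Preorder F] [Zero F] [TopologicalSpace F] [OrderClosedTopology F] {T : E → F}
    (hmono : Monotone T) (hpos : ∀ x, 0 ≤ x → 0 ≤ T x)
    (hsub : ∀ x, 0 ≤ x → Icc 0 (T x) ⊆ closure (T '' Icc 0 x)) :
    IsAlmostIntervalPreserving T := by
  refine ⟨hpos, fun x hx => (hsub x hx).antisymm ?_⟩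
  exact closure_minimal (image_subset_iff.2 fun v hv => ⟨hpos v hv.1, hmono hv.2⟩) isClosed_Icc

theorem nonneg_of_Ici_zero_subset_closure {G F : Type*} [Preorder G] [Zero G]
    [TopologicalSpace G] [Preorder F] [Zero F] [TopologicalSpace F] [OrderClosedTopology F]
    {χ : G → F} (hχ : Continuous χ) {S : Set G} (hS : Ici 0 ⊆ closure S)
    (h : ∀ s ∈ S, 0 ≤ χ s) : ∀ g, 0 ≤ g → 0 ≤ χ g := fun _ hg =>
  closure_minimal h (isClosed_le continuous_const hχ) (hS hg)

section NormedLattice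

variable {G F : Type*}
  [NormedAddCommGroup G] [Lattice G] [HasSolidNorm G] [IsOrderedAddMonoid G]
  [NormedAddCommGroup F] [Lattice F] [HasSolidNorm F] [IsOrderedAddMonoid F]

theorem Ici_zero_subset_closure_iUnion_image_Ici {ι : Type*} {E : ι → Type*}
    [∀ i, Lattice (E i)] [∀ i, Zero (E i)] {φ : ∀ i, E i → G} (hmono : ∀ i, Monotone (φ i))
    (hφ : ∀ i, IsAlmostIntervalPreserving (φ i))
    (hdense : closure (⋃ i, range (φ i)) = univ) :
    Ici 0 ⊆ closure (⋃ i, φ i '' Ici 0) := by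
  intro g (hg : 0 ≤ g)
  have hcut : Continuous fun y : G => g ⊓ (y ⊔ 0) :=
    continuous_const.inf (continuous_id.sup continuous_const)
  have hcut_range : (fun y : G => g ⊓ (y ⊔ 0)) '' ⋃ i, range (φ i) ⊆
      closure (⋃ i, φ i '' Ici 0) := by
    simp only [image_iUnion, iUnion_subset_iff, ← range_comp, range_subset_iff]
    intro i x
    have hx : (0 : E i) ≤ x ⊔ 0 := le_sup_right
    have hmem : g ⊓ (φ i x ⊔ 0) ∈ Icc 0 (φ i (x ⊔ 0)) :=
      ⟨le_inf hg le_sup_right, inf_le_right.trans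
        (sup_le (hmono i le_sup_left) (hφ i |>.1 _ hx))⟩
    rw [(hφ i).2 _ hx] at hmem
    exact closure_mono (image_mono Icc_subset_Ici_self |>.trans
      (subset_iUnion (fun j => φ j '' Ici 0) i)) hmem
  have hg_eq : g ⊓ (g ⊔ 0) = g := by rw [sup_eq_left.2 hg, inf_idem]
  rw [← hg_eq, ← closure_closure (s := ⋃ i, φ i '' Ici 0)]
  refine closure_mono hcut_range (image_closure_subset_closure_image hcut ?_)
  exact ⟨g, by rw [hdense]; trivial, rfl⟩

theorem infDist_le_of_Icc_subset_closure_image {K : NNReal} {χ : G → F}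
    (hχ : LipschitzWith K χ) {g s : G} (hg : 0 ≤ g) (hs : 0 ≤ χ s)
    (hsub : Icc 0 (χ s) ⊆ closure (χ '' Icc 0 s)) {f : F} (hf : f ∈ Icc 0 (χ g)) :
    infDist f (χ '' Icc 0 g) ≤ 2 * K * dist g s := by
  set A := χ '' Icc 0 g
  have hv : ∀ v ∈ Icc 0 s, infDist (χ v) A ≤ K * dist g s := fun v hv => calc
    infDist (χ v) A ≤ dist (χ v) (χ (g ⊓ v)) :=
        infDist_le_dist_of_mem (mem_image_of_mem _ ⟨le_inf hg hv.1, inf_le_left⟩)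
    _ ≤ K * dist v (g ⊓ v) := hχ.dist_le_mul _ _
    _ = K * dist (s ⊓ v) (g ⊓ v) := by rw [inf_eq_right.2 hv.2]
    _ ≤ K * dist g s := by
        gcongr
        rw [dist_eq_norm, dist_comm, dist_eq_norm]
        exact norm_inf_sub_inf_le_norm _ _ _
  have hcut : χ s ⊓ f ∈ closure (χ '' Icc 0 s) := hsub ⟨le_inf hs hf.1, inf_le_left⟩
  have hcut_dist : infDist (χ s ⊓ f) A ≤ K * dist g s :=
    closure_minimal (t := {y | infDist y A ≤ K * dist g s}) (image_subset_iff.2 hv)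
      (isClosed_le (continuous_infDist_pt A) continuous_const) hcut
  calc infDist f A ≤ infDist (χ s ⊓ f) A + dist f (χ s ⊓ f) := infDist_le_infDist_add_dist
    _ = infDist (χ s ⊓ f) A + dist (χ g ⊓ f) (χ s ⊓ f) := by rw [inf_eq_right.2 hf.2]
    _ ≤ K * dist g s + K * dist g s := by
        gcongr
        refine (?_ : _ ≤ dist (χ g) (χ s)).trans (hχ.dist_le_mul _ _)
        rw [dist_eq_norm, dist_eq_norm]
        exact norm_inf_sub_inf_le_norm _ _ _
    _ = 2 * K * dist g s := by ring

theorem Icc_subset_closure_image_of_Ici_zero_subset_closure {K : NNReal} {χ : G → F}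
    (hχ : LipschitzWith K χ) {S : Set G} (hS : Ici 0 ⊆ closure S)
    (h : ∀ s ∈ S, 0 ≤ χ s ∧ Icc 0 (χ s) ⊆ closure (χ '' Icc 0 s)) {g : G} (hg : 0 ≤ g) :
    Icc 0 (χ g) ⊆ closure (χ '' Icc 0 g) := by
  intro f hf
  have hbound : g ∈ {s | infDist f (χ '' Icc 0 g) ≤ 2 * K * dist g s} :=
    closure_minimal (fun s hs => infDist_le_of_Icc_subset_closure_image hχ hg (h s hs).1
        (h s hs).2 hf)
      (isClosed_le continuous_const (continuous_const.mul (continuous_const.dist continuous_id)))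
      (hS hg)
  rw [mem_closure_iff_infDist_zero ((nonempty_Icc.2 hg).image χ)]
  exact le_antisymm (by simpa using hbound) infDist_nonneg

end NormedLattice

theorem factoring_map_almostIntervalPreserving_general
    {ι : Type*}
    (E : ι → Type*)
    [∀ i, NormedAddCommGroup (E i)] [∀ i, Lattice (E i)]
      [∀ i, IsOrderedAddMonoid (E i)] [∀ i, NormedSpace ℝ (E i)]
    {G F : Type*}
    [NormedAddCommGroup G] [Lattice G] [HasSolidNorm G] [IsOrderedAddMonoid G] [NormedSpace ℝ G]
    [NormedAddCommGroup F] [Lattice F] [HasSolidNorm F] [IsOrderedAddMonoid F] [NormedSpace ℝ F]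
    (φ : ∀ i, E i →L[ℝ] G)
    (hφ_pos : ∀ i, ∀ x : E i, 0 ≤ x → 0 ≤ φ i x)
    (hφ_aip : ∀ i, ∀ x : E i, 0 ≤ x → Icc (0 : G) (φ i x) = closure ((φ i) '' Icc 0 x))
    (hdense : closure (⋃ i, Set.range (φ i)) = univ)
    (χ : G →L[ℝ] F) :
    ((∀ g : G, 0 ≤ g → 0 ≤ χ g) ∧
        ∀ g : G, 0 ≤ g → Icc (0 : F) (χ g) = closure (χ '' Icc 0 g)) ↔
      ∀ i, (∀ x : E i, 0 ≤ x → 0 ≤ χ (φ i x)) ∧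
        ∀ x : E i, 0 ≤ x →
          Icc (0 : F) (χ (φ i x)) = closure ((fun e => χ (φ i e)) '' Icc 0 x) := by
  have hφ (i : ι) : IsAlmostIntervalPreserving (φ i) := ⟨hφ_pos i, hφ_aip i⟩
  have hmono (i : ι) : Monotone (φ i) := (monotone_iff_map_nonneg (φ i)).2 (hφ_pos i)
  refine ⟨fun hχ i => IsAlmostIntervalPreserving.comp hχ χ.continuous (hφ i), fun h => ?_⟩
  have hS := Ici_zero_subset_closure_iUnion_image_Ici hmono hφ hdense
  have hχS : ∀ s ∈ ⋃ i, φ i '' Ici 0, 0 ≤ χ s ∧ Icc 0 (χ s) ⊆ closure (χ '' Icc 0 s) := by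
    simp only [mem_iUnion, mem_image]
    rintro _ ⟨i, z, hz, rfl⟩
    refine ⟨(h i).1 z hz, ((h i).2 z hz).trans_subset (closure_mono ?_)⟩
    rw [← image_image]
    refine image_mono ((hmono i).image_Icc_subset.trans (Icc_subset_Icc_left ?_))
    exact (hφ i).1 0 le_rfl
  have hpos := nonneg_of_Ici_zero_subset_closure χ.continuous hS fun s hs => (hχS s hs).1
  exact IsAlmostIntervalPreserving.of_monotone ((monotone_iff_map_nonneg χ).2 hpos) hpos
    fun g hg => Icc_subset_closure_image_of_Ici_zero_subset_closure χ.lipschitz hS hχS hg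

/-- Let `φ_i : E_i → G` be continuous almost interval preserving linear
maps between normed lattices such that `G` is the norm closure of `⋃_i φ_i(E_i)`, and let
`χ : G → F` be a continuous linear map into a normed lattice. Then `χ` is almost interval
preserving iff every `χ ∘ φ_i` is almost interval preserving. -/
theorem factoring_map_almostIntervalPreserving
    {ι : Type*} [Nonempty ι]
    (E : ι → Type*)
    [∀ i, NormedAddCommGroup (E i)] [∀ i, Lattice (E i)]
      [∀ i, HasSolidNorm (E i)] [∀ i, IsOrderedAddMonoid (E i)] [∀ i, NormedSpace ℝ (E i)]
    {G F : Type*}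
    [NormedAddCommGroup G] [Lattice G] [HasSolidNorm G] [IsOrderedAddMonoid G] [NormedSpace ℝ G]
    [NormedAddCommGroup F] [Lattice F] [HasSolidNorm F] [IsOrderedAddMonoid F] [NormedSpace ℝ F]
    (φ : ∀ i, E i →L[ℝ] G)
    (hφ_pos : ∀ i, ∀ x : E i, 0 ≤ x → 0 ≤ φ i x)
    (hφ_aip : ∀ i, ∀ x : E i, 0 ≤ x → Icc (0 : G) (φ i x) = closure ((φ i) '' Icc 0 x))
    (hdense : closure (⋃ i, Set.range (φ i)) = univ)
    (χ : G →L[ℝ] F) :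
    ((∀ g : G, 0 ≤ g → 0 ≤ χ g) ∧
        ∀ g : G, 0 ≤ g → Icc (0 : F) (χ g) = closure (χ '' Icc 0 g)) ↔
      ∀ i, (∀ x : E i, 0 ≤ x → 0 ≤ χ (φ i x)) ∧
        ∀ x : E i, 0 ≤ x →
          Icc (0 : F) (χ (φ i x)) = closure ((fun e => χ (φ i e)) '' Icc 0 x) :=
  factoring_map_almostIntervalPreserving_general E φ hφ_pos hφ_aip hdense χ
end
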